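/- arXiv:2107.05296 — 6 statements merged into one kernel-verified Lean document; each statement's English description precedes it below -/
import Mathlib

section
/- Let T = (V,E) be a finite complete rooted binary tree and let X ⊆ V be a nonempty set. Then the minimum height of an element of the closure cl(X) equals the minimum height of an element of X, i.e. min-h(cl(X)) = min-h(X). -/
/-!
Vertices of the complete rooted binary tree of height `n` are modelled as
binary strings (lists of booleans) of length at most `n`: the root is the empty
list, and the two children of a vertex `x` (when `x.length < n`) are
`x ++ [true]` and `x ++ [false]`.  Leaves are the strings of length exactly `n`
and the height of a vertex is its distance to the leaves below it.
-/

/-- The ambient type of tree vertices: binary strings. -/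
abbrev V : Type := List Bool

/-- The vertex set of the complete binary tree of height `n`. -/
def treeSet (n : ℕ) : Set V := {l : V | l.length ≤ n}

/-- The height of a vertex: its distance to the leaves below it. -/
def hgt (n : ℕ) (v : V) : ℕ := n - v.length

/-- A set `X` is closed if, whenever two elements of a related triple
(a parent together with its two children) belong to `X`, so does the third. -/
def TripleClosed (n : ℕ) (X : Set V) : Prop :=
  ∀ x : V, x.length < n →
    ((x ∈ X → x ++ [true] ∈ X → x ++ [false] ∈ X) ∧
     (x ∈ X → x ++ [false] ∈ X → x ++ [true] ∈ X) ∧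
     (x ++ [true] ∈ X → x ++ [false] ∈ X → x ∈ X))

/-- The closure of `X`: the smallest closed subset of the tree containing `X`. -/
def cl (n : ℕ) (X : Set V) : Set V :=
  ⋂₀ {Y : Set V | X ⊆ Y ∧ Y ⊆ treeSet n ∧ TripleClosed n Y}

/-- `min-h(X)`: the minimum height of an element of `X`. -/
noncomputable def minh (n : ℕ) (X : Set V) : ℕ := sInf (hgt n '' X)

/-- `z` lies on the unique undirected path between `x` and `y`:
`z` is an ancestor of `x` or of `y`, and the longest common prefix of
`x` and `y` is an ancestor of `z`. -/
def OnPath (x y z : V) : Prop :=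
  (z <+: x ∨ z <+: y) ∧ ∀ w : V, w <+: x → w <+: y → w <+: z

/-- `X` is connected: it contains the undirected path between any two of its elements. -/
def Conn (X : Set V) : Prop :=
  ∀ x ∈ X, ∀ y ∈ X, ∀ z : V, OnPath x y z → z ∈ X

/-- `F` encloses `v`: every path from `v` down to a leaf contains an element of `F`. -/
def Encloses (n : ℕ) (F : Set V) (v : V) : Prop :=
  ∀ l : V, l.length = n → v <+: l → ∃ z ∈ F, v <+: z ∧ z <+: l

/-- `F` minimally encloses `v`. -/
def MinEncloses (n : ℕ) (F : Set V) (v : V) : Prop :=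
  Encloses n F v ∧ ∀ F' : Set V, F' ⊂ F → ¬ Encloses n F' v

/-- `r` is the head of `X`: an element of `X` of maximum height. -/
def IsHead (n : ℕ) (X : Set V) (r : V) : Prop :=
  r ∈ X ∧ ∀ y ∈ X, hgt n y ≤ hgt n r

/-- `Fr` is the frontier of the closed connected set `S` with head `x`:
`Fr ⊆ S` minimally encloses `x` and `S` consists exactly of the vertices lying
on the directed path from `x` to some element of `Fr`. -/
def IsFrontier (n : ℕ) (S Fr : Set V) (x : V) : Prop :=
  Fr ⊆ S ∧ MinEncloses n Fr x ∧ S = {z : V | ∃ f ∈ Fr, x <+: z ∧ z <+: f}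

/-!
The vertices of height at least `m` form a closed subset of the tree, so closing `X` never
produces a vertex lower than the lowest vertex of `X`.
-/

theorem subset_cl (n : ℕ) (X : Set V) : X ⊆ cl n X :=
  fun _ hx _ hY => hY.1 hx

theorem cl_subset {n : ℕ} {X Y : Set V} (hXY : X ⊆ Y) (hY : Y ⊆ treeSet n)
    (hYc : TripleClosed n Y) : cl n X ⊆ Y :=
  Set.sInter_subset_of_mem ⟨hXY, hY, hYc⟩

theorem tripleClosed_setOf_le_hgt (n m : ℕ) :
    TripleClosed n {v | v ∈ treeSet n ∧ m ≤ hgt n v} := by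
  intro x hx
  simp only [treeSet, hgt, Set.mem_ofPred_eq, List.length_append, List.length_cons,
    List.length_nil]
  omega

theorem minh_le_hgt {n : ℕ} {X : Set V} {x : V} (hx : x ∈ X) : minh n X ≤ hgt n x :=
  Nat.sInf_le ⟨x, hx, rfl⟩

theorem le_minh {n m : ℕ} {X : Set V} (hX : X.Nonempty) (h : ∀ x ∈ X, m ≤ hgt n x) :
    m ≤ minh n X :=
  le_csInf (hX.image _) (by rintro _ ⟨x, hx, rfl⟩; exact h x hx)

theorem minh_anti {n : ℕ} {X Y : Set V} (hXY : X ⊆ Y) (hX : X.Nonempty) :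
    minh n Y ≤ minh n X :=
  csInf_le_csInf (OrderBot.bddBelow _) (hX.image _) (Set.image_mono hXY)

/-- for a nonempty `X ⊆ V`, `min-h(cl(X)) = min-h(X)`. -/
theorem stmt_0 (n : ℕ) (X : Set V) (hX : X ⊆ treeSet n) (hne : X.Nonempty) :
    minh n (cl n X) = minh n X := by
  have hcl : cl n X ⊆ {v | v ∈ treeSet n ∧ minh n X ≤ hgt n v} :=
    cl_subset (fun _ hx => ⟨hX hx, minh_le_hgt hx⟩) (fun _ hv => hv.1)
      (tripleClosed_setOf_le_hgt n _)
  exact le_antisymm (minh_anti (subset_cl n X) hne)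
    (le_minh (hne.mono (subset_cl n X)) fun _ hv => (hcl hv).2)
end

section
/- Let T = (V,E) be a finite complete rooted binary tree and let X ⊆ V be a nonempty closed connected set. Then: (i) there is a unique element r ∈ X whose height equals the maximum height of an element of X (the 'head' of X); (ii) there is a subset F ⊆ X that minimally encloses r and is such that X is exactly the set of vertices lying on the directed path from r to some element of F (the 'frontier' of X); and (iii) for this F, cl(F) = X. -/
/-!
By connectedness `X` contains the longest common prefix of any two of its elements, so its
shortest element is a prefix of every element: this is the head `r`. The frontier is the set
of prefix-maximal elements of `X`. Closedness under siblings shows that a non-maximal element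
of `X` has both children in `X`. Hence the deepest element of `X` on a path from `r` to a leaf
is maximal, so the frontier encloses `r`; and downward induction on the height shows that every
closed set containing the frontier contains `X`.
-/

theorem List.exists_longest_common_prefix {α : Type*} :
    ∀ x y : List α, ∃ w, w <+: x ∧ w <+: y ∧ ∀ u, u <+: x → u <+: y → u <+: w
  | [], _ => ⟨[], List.nil_prefix, List.nil_prefix, fun _ hu _ => hu⟩
  | _ :: _, [] => ⟨[], List.nil_prefix, List.nil_prefix, fun _ _ hu => hu⟩
  | a :: x, b :: y => by
    by_cases hab : a = b
    · subst hab
      obtain ⟨w, hwx, hwy, hw⟩ := exists_longest_common_prefix x y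
      refine ⟨a :: w, List.cons_prefix_cons.2 ⟨rfl, hwx⟩, List.cons_prefix_cons.2 ⟨rfl, hwy⟩, ?_⟩
      rintro (_ | ⟨c, u⟩) hux huy
      · exact List.nil_prefix
      · rw [List.cons_prefix_cons] at hux huy ⊢
        exact ⟨hux.1, hw u hux.2 huy.2⟩
    · refine ⟨[], List.nil_prefix, List.nil_prefix, ?_⟩
      rintro (_ | ⟨c, u⟩) hux huy
      · exact List.nil_prefix
      · rw [List.cons_prefix_cons] at hux huy
        exact absurd (hux.1.symm.trans huy.1) hab

theorem List.IsPrefix.exists_cons_of_ne {α : Type*} {z w : List α} (h : z <+: w) (hne : z ≠ w) :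
    ∃ b t, w = z ++ b :: t := by
  obtain ⟨_ | ⟨b, t⟩, rfl⟩ := h
  · exact absurd (List.append_nil z).symm hne
  · exact ⟨b, t, rfl⟩

theorem finite_of_subset_treeSet {n : ℕ} {X : Set V} (hX : X ⊆ treeSet n) : X.Finite :=
  (List.finite_length_le Bool n).subset hX

def prefixMaximals (X : Set V) : Set V :=
  {z | z ∈ X ∧ ∀ w ∈ X, z <+: w → w = z}

section

variable {n : ℕ} {X : Set V}

theorem Conn.mem_of_prefix_of_prefix (hconn : Conn X) {r z f : V} (hr : r ∈ X) (hf : f ∈ X)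
    (hrz : r <+: z) (hzf : z <+: f) : z ∈ X :=
  hconn r hr f hf z ⟨Or.inr hzf, fun _ hw _ => hw.trans hrz⟩

theorem Conn.prefix_of_forall_length_le (hconn : Conn X) {r : V} (hr : r ∈ X)
    (hmin : ∀ y ∈ X, r.length ≤ y.length) {z : V} (hz : z ∈ X) : r <+: z := by
  obtain ⟨w, hwr, hwz, hw⟩ := List.exists_longest_common_prefix r z
  have hwX : w ∈ X := hconn r hr z hz w ⟨Or.inl hwr, hw⟩
  rwa [← hwr.eq_of_length (le_antisymm hwr.length_le (hmin w hwX))]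

theorem isHead_iff (hX : X ⊆ treeSet n) {r : V} :
    IsHead n X r ↔ r ∈ X ∧ ∀ y ∈ X, r.length ≤ y.length := by
  refine and_congr_right fun hr => forall₂_congr fun y hy => ?_
  have hy' : y.length ≤ n := hX hy
  have hr' : r.length ≤ n := hX hr
  simp only [hgt]
  omega

theorem Conn.existsUnique_isHead (hconn : Conn X) (hX : X ⊆ treeSet n) (hne : X.Nonempty) :
    ∃! r, IsHead n X r := by
  obtain ⟨r, hr, hmin⟩ := Set.exists_min_image X List.length (finite_of_subset_treeSet hX) hne
  refine ⟨r, (isHead_iff hX).2 ⟨hr, hmin⟩, fun r' hr' => ?_⟩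
  obtain ⟨hr'X, hmin'⟩ := (isHead_iff hX).1 hr'
  have hrr' : r <+: r' := hconn.prefix_of_forall_length_le hr hmin hr'X
  exact (hrr'.eq_of_length (le_antisymm hrr'.length_le (hmin' r hr))).symm

theorem Conn.prefix_of_isHead (hconn : Conn X) (hX : X ⊆ treeSet n) {r : V}
    (hr : IsHead n X r) {z : V} (hz : z ∈ X) : r <+: z :=
  hconn.prefix_of_forall_length_le hr.1 ((isHead_iff hX).1 hr).2 hz

theorem exists_mem_prefixMaximals_prefix (hX : X ⊆ treeSet n) {z : V} (hz : z ∈ X) :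
    ∃ f ∈ prefixMaximals X, z <+: f := by
  obtain ⟨f, ⟨hfX, hzf⟩, hmax⟩ := Set.exists_max_image {w | w ∈ X ∧ z <+: w} List.length
    ((finite_of_subset_treeSet hX).subset fun _ hw => hw.1) ⟨z, hz, List.prefix_rfl⟩
  refine ⟨f, ⟨hfX, fun w hw hfw => ?_⟩, hzf⟩
  exact (hfw.eq_of_length (le_antisymm hfw.length_le (hmax w ⟨hw, hzf.trans hfw⟩))).symm

theorem TripleClosed.child_mem (hcl : TripleClosed n X) (hX : X ⊆ treeSet n) {z : V} (hz : z ∈ X)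
    {b : Bool} (hb : z ++ [b] ∈ X) (c : Bool) : z ++ [c] ∈ X := by
  have hlen : z.length < n := by
    have : (z ++ [b]).length ≤ n := hX hb
    simp only [List.length_append, List.length_singleton] at this
    omega
  obtain ⟨htf, hft, -⟩ := hcl z hlen
  cases b <;> cases c
  exacts [hb, hft hz hb, htf hz hb, hb]

section Rooted

variable {r : V} (hr : r ∈ X) (hroot : ∀ z ∈ X, r <+: z)
include hr hroot

theorem child_mem_of_not_mem_prefixMaximals (hX : X ⊆ treeSet n) (hcl : TripleClosed n X)
    (hconn : Conn X) {z : V} (hz : z ∈ X) (hmax : z ∉ prefixMaximals X) (c : Bool) :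
    z ++ [c] ∈ X := by
  obtain ⟨w, hw, hzw, hwz⟩ : ∃ w ∈ X, z <+: w ∧ w ≠ z := by
    simpa [prefixMaximals, hz] using hmax
  obtain ⟨b, t, rfl⟩ := hzw.exists_cons_of_ne hwz.symm
  have hb : z ++ [b] ∈ X :=
    hconn.mem_of_prefix_of_prefix hr hw ((hroot z hz).trans (List.prefix_append z [b]))
      ⟨t, by simp⟩
  exact hcl.child_mem hX hz hb c

theorem encloses_prefixMaximals (hX : X ⊆ treeSet n) (hcl : TripleClosed n X) (hconn : Conn X) :
    Encloses n (prefixMaximals X) r := by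
  intro l hl hrl
  obtain ⟨z, ⟨hzX, hzl⟩, hdeepest⟩ := Set.exists_max_image {z | z ∈ X ∧ z <+: l} List.length
    ((finite_of_subset_treeSet hX).subset fun _ hz => hz.1) ⟨r, hr, hrl⟩
  refine ⟨z, ?_, hroot z hzX, hzl⟩
  by_contra hmax
  have hchild := child_mem_of_not_mem_prefixMaximals hr hroot hX hcl hconn hzX hmax
  have hzl' : z ≠ l := by
    rintro rfl
    have : (z ++ [true]).length ≤ n := hX (hchild true)
    simp only [List.length_append, List.length_singleton] at this
    omega
  obtain ⟨c, t, rfl⟩ := hzl.exists_cons_of_ne hzl'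
  have := hdeepest (z ++ [c]) ⟨hchild c, ⟨t, by simp⟩⟩
  simp at this

theorem eq_setOf_prefix_prefixMaximals (hX : X ⊆ treeSet n) (hconn : Conn X) :
    X = {z | ∃ f ∈ prefixMaximals X, r <+: z ∧ z <+: f} := by
  ext z
  constructor
  · intro hz
    obtain ⟨f, hf, hzf⟩ := exists_mem_prefixMaximals_prefix hX hz
    exact ⟨f, hf, hroot z hz, hzf⟩
  · rintro ⟨f, hf, hrz, hzf⟩
    exact hconn.mem_of_prefix_of_prefix hr hf.1 hrz hzf

theorem subset_of_prefixMaximals_subset (hX : X ⊆ treeSet n) (hcl : TripleClosed n X)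
    (hconn : Conn X) {Y : Set V} (hY : TripleClosed n Y) (hmaxY : prefixMaximals X ⊆ Y) :
    X ⊆ Y := by
  suffices ∀ k, ∀ z ∈ X, n - z.length ≤ k → z ∈ Y from fun z hz => this _ z hz le_rfl
  intro k
  induction k with
  | zero =>
    intro z hz hk
    refine hmaxY ⟨hz, fun w hw hzw => (hzw.eq_of_length (le_antisymm hzw.length_le ?_)).symm⟩
    have : w.length ≤ n := hX hw
    omega
  | succ k ih =>
    intro z hz hk
    by_cases hmax : z ∈ prefixMaximals X
    · exact hmaxY hmax
    have hchild := child_mem_of_not_mem_prefixMaximals hr hroot hX hcl hconn hz hmax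
    have hlen : (z ++ [true]).length ≤ n := hX (hchild true)
    simp only [List.length_append, List.length_singleton] at hlen
    have hchildY (c : Bool) : z ++ [c] ∈ Y :=
      ih _ (hchild c) (by simp only [List.length_append, List.length_singleton]; omega)
    exact (hY z (by omega)).2.2 (hchildY true) (hchildY false)

theorem cl_prefixMaximals (hX : X ⊆ treeSet n) (hcl : TripleClosed n X) (hconn : Conn X) :
    cl n (prefixMaximals X) = X := by
  refine Set.Subset.antisymm (Set.sInter_subset_of_mem ⟨fun _ hz => hz.1, hX, hcl⟩) ?_
  exact fun _ hz => Set.mem_sInter.2 fun _ hY =>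
    subset_of_prefixMaximals_subset hr hroot hX hcl hconn hY.2.2 hY.1 hz

end Rooted

theorem MinEncloses.of_isPrefix_antichain {F : Set V} {r : V} (henc : Encloses n F r)
    (hlen : ∀ f ∈ F, f.length ≤ n) (hrF : ∀ f ∈ F, r <+: f)
    (hanti : ∀ f ∈ F, ∀ g ∈ F, f <+: g → f = g) : MinEncloses n F r := by
  refine ⟨henc, fun F' hF' henc' => ?_⟩
  obtain ⟨f, hf, hfF'⟩ := Set.exists_of_ssubset hF'
  have hfl : f <+: f ++ List.replicate (n - f.length) true := List.prefix_append _ _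
  obtain ⟨z, hzF', -, hzl⟩ :=
    henc' _ (by simp only [List.length_append, List.length_replicate]; have := hlen f hf; omega) ((hrF f hf).trans hfl)
  have hzF : z ∈ F := hF'.1 hzF'
  rcases List.prefix_or_prefix_of_prefix hzl hfl with hzf | hfz
  · exact hfF' (hanti z hzF f hf hzf ▸ hzF')
  · exact hfF' ((hanti f hf z hzF hfz).symm ▸ hzF')

theorem isFrontier_prefixMaximals (hX : X ⊆ treeSet n) (hcl : TripleClosed n X) (hconn : Conn X)
    {r : V} (hr : r ∈ X) (hroot : ∀ z ∈ X, r <+: z) : IsFrontier n X (prefixMaximals X) r :=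
  ⟨fun _ hf => hf.1,
    .of_isPrefix_antichain (encloses_prefixMaximals hr hroot hX hcl hconn)
      (fun _ hf => hX hf.1) (fun _ hf => hroot _ hf.1) fun _ hf g hg hfg => (hf.2 g hg.1 hfg).symm,
    eq_setOf_prefix_prefixMaximals hr hroot hX hconn⟩

end

/-- a nonempty closed connected set `X` has a unique head `r`
(the element of maximum height), and there is a frontier `F ⊆ X` which
minimally encloses `r`, such that `X` is exactly the set of vertices on the
directed paths from `r` to elements of `F`, and `cl(F) = X`. -/
theorem stmt_1 (n : ℕ) (X : Set V) (hX : X ⊆ treeSet n) (hne : X.Nonempty)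
    (hcl : TripleClosed n X) (hconn : Conn X) :
    (∃! r : V, IsHead n X r) ∧
    (∀ r : V, IsHead n X r →
      ∃ F : Set V, F ⊆ X ∧ MinEncloses n F r ∧
        X = {z : V | ∃ f ∈ F, r <+: z ∧ z <+: f} ∧ cl n F = X) := by
  refine ⟨hconn.existsUnique_isHead hX hne, fun r hr => ?_⟩
  have hroot : ∀ z ∈ X, r <+: z := fun _ => hconn.prefix_of_isHead hX hr
  obtain ⟨hsub, hmin, hdesc⟩ := isFrontier_prefixMaximals hX hcl hconn hr.1 hroot
  exact ⟨prefixMaximals X, hsub, hmin, hdesc, cl_prefixMaximals hr.1 hroot hX hcl hconn⟩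
end

section
/- Let T = (V,E) be a finite complete rooted binary tree and let X ⊆ V be a nonempty closed connected set with head r and frontier F. Then |F| > hgt(r) − min-h(X), i.e. the size of the frontier strictly exceeds the difference between the height of the head of X and the minimum height of an element of X. -/
/-!
Let `f₀` be the element of the frontier lying below a vertex of minimal height of `X`. For every
level `i` between `r` and `f₀`, the leaves that leave the path from `r` to `f₀` exactly at level
`i` must be enclosed by some element of the frontier, and by minimality that element cannot lie
on the path itself. These elements are distinct for distinct levels and differ from `f₀`, so the
frontier has more than `|f₀| - |r| ≥ hgt r - min-h X` elements.
-/

lemma not_take_add_one_prefix_of_flip_prefix {l x : V} {i : ℕ} (hi : i < l.length)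
    (hflip : l.take i ++ [!l[i]] <+: x) (htake : l.take (i + 1) <+: x) : False := by
  have hlen : (l.take (i + 1)).length = (l.take i ++ [!l[i]]).length := by
    simp only [List.length_take, List.length_append, List.length_singleton]
    omega
  have heq := (List.prefix_of_prefix_length_le htake hflip hlen.le).eq_of_length hlen
  rw [List.take_add_one, List.getElem?_eq_getElem hi, Option.toList_some,
    List.append_cancel_left_eq, List.singleton_inj] at heq
  exact Bool.not_ne_self _ heq.symm

namespace MinEncloses

variable {n : ℕ} {F : Set V} {v : V}

lemma exists_leaf (h : MinEncloses n F v) {f : V} (hf : f ∈ F) :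
    v <+: f ∧ ∃ l : V, l.length = n ∧ f <+: l := by
  by_contra hnot
  refine h.2 (F \ {f}) (Set.sdiff_singleton_ssubset.2 hf) fun l hl hvl => ?_
  obtain ⟨z, hzF, hvz, hzl⟩ := h.1 l hl hvl
  refine ⟨z, ⟨hzF, ?_⟩, hvz, hzl⟩
  rintro rfl
  exact hnot ⟨hvz, l, hl, hzl⟩

lemma length_le (h : MinEncloses n F v) {f : V} (hf : f ∈ F) : f.length ≤ n := by
  obtain ⟨-, l, hl, hfl⟩ := h.exists_leaf hf
  exact hl ▸ hfl.length_le

lemma finite (h : MinEncloses n F v) : F.Finite :=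
  (List.finite_length_le Bool n).subset fun _ hf => h.length_le hf

lemma eq_of_prefix (h : MinEncloses n F v) {f g : V} (hf : f ∈ F) (hg : g ∈ F) (hfg : f <+: g) :
    f = g := by
  by_contra hne
  refine h.2 (F \ {g}) (Set.sdiff_singleton_ssubset.2 hg) fun l hl hvl => ?_
  obtain ⟨z, hzF, hvz, hzl⟩ := h.1 l hl hvl
  by_cases hzg : z = g
  · subst hzg
    exact ⟨f, ⟨hf, hne⟩, (h.exists_leaf hf).1, hfg.trans hzl⟩
  · exact ⟨z, ⟨hzF, hzg⟩, hvz, hzl⟩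

end MinEncloses

namespace Encloses

variable {n : ℕ} {F : Set V} {r f₀ : V}

lemma exists_mem_diverging_at (henc : Encloses n F r)
    (hmin : ∀ z ∈ F, z <+: f₀ → z = f₀) (hrf₀ : r <+: f₀) (hf₀n : f₀.length ≤ n) {i : ℕ}
    (hri : r.length ≤ i) (hi : i < f₀.length) :
    ∃ w ∈ F, f₀.take i <+: w ∧ ¬ f₀.take (i + 1) <+: w := by
  set leaf : V := f₀.take i ++ [!f₀[i]] ++ List.replicate (n - (i + 1)) true
  have htake_len : (f₀.take i).length = i := by simp only [List.length_take]; omega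
  have hflip : f₀.take i ++ [!f₀[i]] <+: leaf := List.prefix_append _ _
  have htake : f₀.take i <+: leaf := (List.prefix_append _ _).trans hflip
  have hleaf_len : leaf.length = n := by
    simp only [leaf, List.length_append, htake_len, List.length_singleton, List.length_replicate]
    omega
  have hr_leaf : r <+: leaf := (List.prefix_take_iff.2 ⟨hrf₀, hri⟩).trans htake
  obtain ⟨z, hzF, -, hz_leaf⟩ := henc leaf hleaf_len hr_leaf
  have hiz : i < z.length := by
    by_contra! hzi
    have hz_take : z <+: f₀.take i :=
      List.prefix_of_prefix_length_le hz_leaf htake (by omega)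
    have hzf₀ := hmin z hzF (hz_take.trans (List.take_prefix _ _))
    rw [hzf₀] at hzi
    omega
  refine ⟨z, hzF, List.prefix_of_prefix_length_le htake hz_leaf (by omega), fun hz => ?_⟩
  exact not_take_add_one_prefix_of_flip_prefix hi hflip (hz.trans hz_leaf)

lemma length_sub_lt_ncard (henc : Encloses n F r) (hfin : F.Finite) (hf₀ : f₀ ∈ F)
    (hmin : ∀ z ∈ F, z <+: f₀ → z = f₀) (hrf₀ : r <+: f₀) (hf₀n : f₀.length ≤ n) :
    f₀.length - r.length < F.ncard := by
  have hdiv : ∀ i ∈ (Finset.Ico r.length f₀.length : Set ℕ),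
      ∃ w ∈ F, f₀.take i <+: w ∧ ¬ f₀.take (i + 1) <+: w := fun i hi => by
    rw [Finset.coe_Ico, Set.mem_Ico] at hi
    exact henc.exists_mem_diverging_at hmin hrf₀ hf₀n hi.1 hi.2
  choose! w hwF hw_take hw_not using hdiv
  have hmaps : ∀ i ∈ (Finset.Ico r.length f₀.length : Set ℕ), w i ∈ F \ {f₀} := fun i hi =>
    ⟨hwF i hi, fun hwi => hw_not i hi (hwi ▸ List.take_prefix _ _)⟩
  have hinj : Set.InjOn w (Finset.Ico r.length f₀.length : Set ℕ) := by
    intro i hi j hj hij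
    by_contra hne
    rcases Nat.lt_or_gt_of_ne hne with hlt | hlt
    · exact hw_not i hi ((List.take_prefix_take_left hlt).trans (hij ▸ hw_take j hj))
    · exact hw_not j hj ((List.take_prefix_take_left hlt).trans (hij ▸ hw_take i hi))
  have hcard := Set.ncard_le_ncard_of_injOn w hmaps hinj hfin.sdiff
  rw [Set.ncard_coe_finset, Nat.card_Ico, Set.ncard_sdiff_singleton_of_mem hf₀] at hcard
  have hpos : 0 < F.ncard := (Set.ncard_pos hfin).2 ⟨f₀, hf₀⟩
  omega

end Encloses

lemma MinEncloses.length_sub_lt_ncard {n : ℕ} {F : Set V} {r f₀ : V} (h : MinEncloses n F r)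
    (hf₀ : f₀ ∈ F) : f₀.length - r.length < F.ncard :=
  h.1.length_sub_lt_ncard h.finite hf₀ (fun _ hz hzf₀ => h.eq_of_prefix hz hf₀ hzf₀)
    (h.exists_leaf hf₀).1 (h.length_le hf₀)

theorem stmt_2_general (n : ℕ) (X F : Set V) (r : V) (hne : X.Nonempty)
    (hF : IsFrontier n X F r) :
    F.ncard > hgt n r - minh n X := by
  obtain ⟨-, hmin, hX⟩ := hF
  obtain ⟨m, hmX, hm⟩ := Nat.sInf_mem (hne.image (hgt n))
  obtain ⟨f₀, hf₀, -, hmf₀⟩ := hX ▸ hmX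
  have hcard := hmin.length_sub_lt_ncard hf₀
  have hmlen := hmf₀.length_le
  rw [minh, ← hm]
  simp only [hgt]
  omega

/-- for a nonempty closed connected set `X` with head `r` and
frontier `F`, the size of `F` strictly exceeds `hgt(r) - min-h(X)`. -/
theorem stmt_2 (n : ℕ) (X F : Set V) (r : V) (hX : X ⊆ treeSet n) (hne : X.Nonempty)
    (hcl : TripleClosed n X) (hconn : Conn X)
    (hr : IsHead n X r) (hF : IsFrontier n X F r) :
    F.ncard > hgt n r - minh n X :=
  stmt_2_general n X F r hne hF
end

section
/- Let T = (V,E) be a finite complete rooted binary tree, p a prime, X ⊆ V a closed set, and ρ : X → Z/pZ. Then ρ is consistent (i.e. ρ(x) = ρ(y) + ρ(z) whenever x,y,z ∈ X and y,z are the two children of x) if and only if for every x ∈ X and every F ⊆ X such that F minimally encloses x, one has ρ(x) = Σ_{y ∈ F} ρ(y) (sum in Z/pZ). -/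
/-- `ρ` is consistent on a closed set `X`: `ρ(x) = ρ(y) + ρ(z)` whenever
`x, y, z ∈ X` and `y, z` are the two children of `x`. -/
def ConsistentOn (p : ℕ) (X : Set V) (ρ : V → ZMod p) : Prop :=
  ∀ x : V, x ∈ X → x ++ [true] ∈ X → x ++ [false] ∈ X →
    ρ x = ρ (x ++ [true]) + ρ (x ++ [false])

/-- `ρ` (viewed as a function with domain `X`) is consistent: it has a
consistent extension to the closure of `X`. -/
def Consistent (n p : ℕ) (X : Set V) (ρ : V → ZMod p) : Prop :=
  ∃ ρ' : V → ZMod p, ConsistentOn p (cl n X) ρ' ∧ ∀ x ∈ X, ρ' x = ρ x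

/-!
Induction on the height of `x`. If `x ∉ F`, the elements of a minimal enclosing set `F`
split into those below the two children of `x`, and each part minimally encloses its child.
The children need not lie in `X`, so the induction proves `x ∈ X` along with the sum formula:
closedness gives membership from the two children, and consistency at `x` adds the two
partial sums.
Conversely, the two children of `x` minimally enclose `x`, and the sum formula for this set
is the consistency condition at `x`.
-/

section Prefix

variable {α : Type*} {v w l : List α}

theorem eq_of_append_singleton_prefix {b c : α} (hb : v ++ [b] <+: l) (hc : v ++ [c] <+: l) :
    b = c := by
  simpa using (List.prefix_of_prefix_length_le hb hc (by simp)).eq_of_length (by simp)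

theorem exists_append_singleton_prefix (hvw : v <+: w) (hne : w ≠ v) :
    ∃ b, v ++ [b] <+: w := by
  obtain ⟨_ | ⟨b, t⟩, rfl⟩ := hvw
  · simp at hne
  · exact ⟨b, t, by simp⟩

theorem exists_length_eq_prefix [Inhabited α] {n : ℕ} (hw : w.length ≤ n) :
    ∃ l : List α, l.length = n ∧ w <+: l :=
  ⟨w ++ List.replicate (n - w.length) default,
    by simp only [List.length_append, List.length_replicate]; omega, List.prefix_append _ _⟩

end Prefix

section Enclosure

variable {n : ℕ} {F G H : Set V} {v : V}

theorem encloses_singleton_self (n : ℕ) (v : V) : Encloses n {v} v :=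
  fun _ _ hvl => ⟨v, rfl, List.prefix_refl v, hvl⟩

theorem Encloses.mem_of_length_eq (hF : Encloses n F v) (hv : v.length = n) : v ∈ F := by
  obtain ⟨z, hzF, hvz, hzv⟩ := hF v hv (List.prefix_refl v)
  rwa [hzv.eq_of_length (le_antisymm hzv.length_le hvz.length_le)] at hzF

theorem Encloses.child (hF : Encloses n F v) (hv : v ∉ F) (b : Bool) :
    Encloses n {f ∈ F | v ++ [b] <+: f} (v ++ [b]) := by
  intro l hl hbl
  obtain ⟨z, hzF, hvz, hzl⟩ := hF l hl ((List.prefix_append v [b]).trans hbl)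
  obtain ⟨c, hcz⟩ := exists_append_singleton_prefix hvz (ne_of_mem_of_not_mem hzF hv)
  obtain rfl := eq_of_append_singleton_prefix (hcz.trans hzl) hbl
  exact ⟨z, ⟨hzF, hcz⟩, hcz, hzl⟩

theorem Encloses.union_of_children {b : Bool} (hv : v.length ≠ n)
    (hG : Encloses n G (v ++ [b])) (hH : Encloses n H (v ++ [!b])) :
    Encloses n (G ∪ H) v := by
  intro l hl hvl
  obtain ⟨c, hcl⟩ := exists_append_singleton_prefix hvl (by rintro rfl; exact hv hl)
  have below_child {K : Set V} (hK : Encloses n K (v ++ [c])) : ∃ z ∈ K, v <+: z ∧ z <+: l :=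
    let ⟨z, hzK, hcz, hzl⟩ := hK l hl hcl
    ⟨z, hzK, (List.prefix_append v [c]).trans hcz, hzl⟩
  rcases Bool.eq_or_eq_not c b with rfl | rfl
  · obtain ⟨z, hzG, hz⟩ := below_child hG
    exact ⟨z, Or.inl hzG, hz⟩
  · obtain ⟨z, hzH, hz⟩ := below_child hH
    exact ⟨z, Or.inr hzH, hz⟩

namespace MinEncloses

theorem prefix_of_mem (hF : MinEncloses n F v) {f : V} (hf : f ∈ F) : v <+: f := by
  by_contra hvf
  refine hF.2 {g ∈ F | v <+: g} ⟨Set.sep_subset _ _, fun h => hvf (h hf).2⟩ fun l hl hvl => ?_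
  obtain ⟨z, hzF, hvz, hzl⟩ := hF.1 l hl hvl
  exact ⟨z, ⟨hzF, hvz⟩, hvz, hzl⟩

theorem eq_singleton_of_mem (hF : MinEncloses n F v) (hv : v ∈ F) : F = {v} := by
  by_contra hne
  exact hF.2 {v} ((Set.singleton_subset_iff.2 hv).ssubset_of_ne (Ne.symm hne))
    (encloses_singleton_self n v)

theorem eq_union_children (hF : MinEncloses n F v) (hv : v ∉ F) :
    F = {f ∈ F | v ++ [true] <+: f} ∪ {f ∈ F | v ++ [false] <+: f} := by
  ext f
  refine ⟨fun hf => ?_, by rintro (⟨hf, -⟩ | ⟨hf, -⟩) <;> exact hf⟩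
  obtain ⟨b, hb⟩ :=
    exists_append_singleton_prefix (hF.prefix_of_mem hf) (ne_of_mem_of_not_mem hf hv)
  cases b
  · exact Or.inr ⟨hf, hb⟩
  · exact Or.inl ⟨hf, hb⟩

theorem child (hF : MinEncloses n F v) (hv : v ∉ F) (b : Bool) :
    MinEncloses n {f ∈ F | v ++ [b] <+: f} (v ++ [b]) := by
  refine ⟨hF.1.child hv b, fun G hG hGenc => ?_⟩
  obtain ⟨f, ⟨hfF, hbf⟩, hfG⟩ := Set.exists_of_ssubset hG
  have hvn : v.length ≠ n := fun h => hv (hF.1.mem_of_length_eq h)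
  refine hF.2 (G ∪ {f ∈ F | v ++ [!b] <+: f}) ⟨?_, fun hsub => ?_⟩
    (hGenc.union_of_children hvn (hF.1.child hv !b))
  · exact Set.union_subset (hG.1.trans (Set.sep_subset _ _)) (Set.sep_subset _ _)
  · rcases hsub hfF with hf | ⟨-, hf⟩
    · exact hfG hf
    · exact Bool.not_ne_self b (eq_of_append_singleton_prefix hbf hf).symm

end MinEncloses

theorem minEncloses_children (hv : v.length < n) :
    MinEncloses n {v ++ [true], v ++ [false]} v := by
  refine ⟨?_, fun F hF hFenc => ?_⟩
  · rw [Set.insert_eq]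
    exact (encloses_singleton_self n _).union_of_children (b := true) hv.ne
      (encloses_singleton_self n _)
  obtain ⟨f, hf, hfF⟩ := Set.exists_of_ssubset hF
  obtain ⟨b, rfl⟩ : ∃ b, f = v ++ [b] := by rcases hf with rfl | rfl <;> exact ⟨_, rfl⟩
  obtain ⟨l, hl, hbl⟩ := exists_length_eq_prefix (w := v ++ [b]) (by simpa using hv)
  obtain ⟨z, hzF, -, hzl⟩ := hFenc l hl ((List.prefix_append v [b]).trans hbl)
  obtain ⟨c, rfl⟩ : ∃ c, z = v ++ [c] := by rcases hF.1 hzF with rfl | rfl <;> exact ⟨_, rfl⟩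
  obtain rfl := eq_of_append_singleton_prefix hzl hbl
  exact hfF hzF

end Enclosure

theorem ConsistentOn.mem_and_eq_finsum_of_minEncloses {n p : ℕ} {X : Set V}
    {ρ : V → ZMod p} (hX : X ⊆ treeSet n) (hXcl : TripleClosed n X) (hρ : ConsistentOn p X ρ)
    {v : V} (hvn : v.length ≤ n) {F : Set V} (hFX : F ⊆ X) (hF : MinEncloses n F v) :
    v ∈ X ∧ ρ v = ∑ᶠ y ∈ F, ρ y := by
  by_cases hvF : v ∈ F
  · rw [hF.eq_singleton_of_mem hvF, finsum_mem_singleton]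
    exact ⟨hFX hvF, rfl⟩
  have hvlt : v.length < n := hvn.lt_of_ne fun h => hvF (hF.1.mem_of_length_eq h)
  have hchild (b : Bool) :
      v ++ [b] ∈ X ∧ ρ (v ++ [b]) = ∑ᶠ y ∈ {f ∈ F | v ++ [b] <+: f}, ρ y :=
    hρ.mem_and_eq_finsum_of_minEncloses hX hXcl (v := v ++ [b]) (by simpa using hvlt)
      (fun f hf => hFX hf.1) (hF.child hvF b)
  obtain ⟨htX, hsumt⟩ := hchild true
  obtain ⟨hfX, hsumf⟩ := hchild false
  have hvX : v ∈ X := (hXcl v hvlt).2.2 htX hfX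
  have hfin (b : Bool) : {f ∈ F | v ++ [b] <+: f}.Finite :=
    (List.finite_length_le Bool n).subset fun f hf => hX (hFX hf.1)
  have hdisj : Disjoint {f ∈ F | v ++ [true] <+: f} {f ∈ F | v ++ [false] <+: f} :=
    Set.disjoint_left.2 fun _ ht hf => Bool.noConfusion (eq_of_append_singleton_prefix ht.2 hf.2)
  refine ⟨hvX, ?_⟩
  rw [hF.eq_union_children hvF, finsum_mem_union hdisj (hfin true) (hfin false), ← hsumt, ← hsumf]
  exact hρ v hvX htX hfX
termination_by n - v.length

theorem stmt_3_general (n p : ℕ) (X : Set V) (hX : X ⊆ treeSet n)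
    (hXcl : TripleClosed n X) (ρ : V → ZMod p) :
    ConsistentOn p X ρ ↔
      ∀ x ∈ X, ∀ F : Set V, F ⊆ X → MinEncloses n F x → ρ x = ∑ᶠ y ∈ F, ρ y := by
  refine ⟨fun hρ x hx F hFX hF =>
    (hρ.mem_and_eq_finsum_of_minEncloses hX hXcl (hX hx) hFX hF).2, fun h x hx hxT hxF => ?_⟩
  have hxn : x.length < n := by simpa [treeSet] using hX hxT
  have hpair : {x ++ [true], x ++ [false]} ⊆ X :=
    Set.insert_subset hxT (Set.singleton_subset_iff.2 hxF)
  rw [h x hx _ hpair (minEncloses_children hxn), finsum_mem_pair (by simp)]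

/-- on a closed set `X`, `ρ` is consistent if and only if for
every `x ∈ X` and every `F ⊆ X` minimally enclosing `x`,
`ρ(x) = Σ_{y ∈ F} ρ(y)`. -/
theorem stmt_3 (n p : ℕ) (hp : p.Prime) (X : Set V) (hX : X ⊆ treeSet n)
    (hXcl : TripleClosed n X) (ρ : V → ZMod p) :
    ConsistentOn p X ρ ↔
      ∀ x ∈ X, ∀ F : Set V, F ⊆ X → MinEncloses n F x → ρ x = ∑ᶠ y ∈ F, ρ y :=
  stmt_3_general n p X hX hXcl ρ
end

section
/- Let p be a prime, α a set, f : α → α a bijection satisfying f^p = id (f composed with itself p times is the identity), and let ~ be an equivalence relation on α such that for all x, y ∈ α, x ~ y holds if and only if f(x) ~ f(y). If for some a ∈ α there exist d₁, d₂ ∈ {0, 1, …, p−1} with d₁ ≠ d₂ and f^{d₁}(a) ~ f^{d₂}(a), then f(a) ~ a. -/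
/-! The exponents `n : ℤ` with `f^n a ~ a` form an additive subgroup of `ℤ`, because `f` preserves `~`.
It contains `p`, since `f^p = id`, and `d₂ - d₁`, which is prime to `p` as `0 < |d₂ - d₁| < p`;
by Bézout it contains `1`. -/

namespace Equiv.Perm

variable {α : Type*} {R : α → α → Prop} {f : Perm α}

def relAut (R : α → α → Prop) : Subgroup (Perm α) where
  carrier := {g | ∀ x y, R (g x) (g y) ↔ R x y}
  one_mem' _ _ := Iff.rfl
  mul_mem' hg hh x y := (hg _ _).trans (hh x y)
  inv_mem' {g} hg x y := by simpa using (hg (g⁻¹ x) (g⁻¹ y)).symm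

theorem rel_zpow_apply_iff (hf : ∀ x y, R x y ↔ R (f x) (f y)) (n : ℤ) (x y : α) :
    R ((f ^ n) x) ((f ^ n) y) ↔ R x y :=
  zpow_mem (show f ∈ relAut R from fun x y => (hf x y).symm) n x y

def relatedExponents (hR : Equivalence R) (hf : ∀ x y, R x y ↔ R (f x) (f y)) (a : α) :
    AddSubgroup ℤ where
  carrier := {n | R a ((f ^ n) a)}
  zero_mem' := by simpa using hR.refl a
  add_mem' {m n} hm hn := by
    refine hR.trans hm ?_
    rw [zpow_add, mul_apply, rel_zpow_apply_iff hf]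
    exact hn
  neg_mem' {n} hn := by
    change R a ((f ^ (-n)) a)
    rw [← rel_zpow_apply_iff hf n]
    simpa using hR.symm hn

theorem mem_relatedExponents_iff (hR : Equivalence R) (hf : ∀ x y, R x y ↔ R (f x) (f y))
    {a : α} {n : ℤ} : n ∈ relatedExponents hR hf a ↔ R a ((f ^ n) a) :=
  Iff.rfl

end Equiv.Perm

theorem AddSubgroup.one_mem_of_isCoprime {S : AddSubgroup ℤ} {m n : ℤ} (h : IsCoprime m n)
    (hm : m ∈ S) (hn : n ∈ S) : 1 ∈ S := by
  obtain ⟨u, v, huv⟩ := h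
  rw [← huv]
  exact add_mem (zsmul_mem hm u) (zsmul_mem hn v)

open Equiv.Perm in
/-- let `p` be prime, `f` a bijection of a set `α` with
`f^p = id`, and `R` an equivalence relation such that `R x y ↔ R (f x) (f y)`.
If `f^{d₁} a` and `f^{d₂} a` are related for some distinct `d₁, d₂ < p`, then
`f a` is related to `a`. -/
theorem stmt_8 {α : Type*} (p : ℕ) (hp : p.Prime) (f : Equiv.Perm α)
    (hfp : f ^ p = 1) (R : α → α → Prop) (hR : Equivalence R)
    (hcong : ∀ x y : α, R x y ↔ R (f x) (f y))
    (a : α) (d₁ d₂ : ℕ) (hd₁ : d₁ < p) (hd₂ : d₂ < p) (hne : d₁ ≠ d₂)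
    (h : R ((f ^ d₁) a) ((f ^ d₂) a)) : R (f a) a := by
  have hp_mem : (p : ℤ) ∈ relatedExponents hR hcong a := by
    rw [mem_relatedExponents_iff, zpow_natCast, hfp]
    exact hR.refl a
  have hd_mem : (d₂ - d₁ : ℤ) ∈ relatedExponents hR hcong a := by
    rw [mem_relatedExponents_iff, ← rel_zpow_apply_iff hcong d₁, ← mul_apply, ← zpow_add]
    simpa using h
  have hcop : IsCoprime (p : ℤ) (d₂ - d₁) := by
    refine (Nat.prime_iff_prime_int.mp hp).coprime_iff_not_dvd.mpr fun hdvd => hne ?_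
    have := Int.eq_zero_of_abs_lt_dvd hdvd (abs_lt.mpr ⟨by omega, by omega⟩)
    omega
  have h_one := AddSubgroup.one_mem_of_isCoprime hcop hp_mem hd_mem
  rw [mem_relatedExponents_iff, zpow_one] at h_one
  exact hR.symm h_one
end

section
/- Let n ≥ 1, let p be a prime, let T = (V,E) be the complete binary tree of height n with leaf set L, and let σ : L → Z/pZ. In the PSP instance P(n,p,σ,t), for every vertex v ∈ V and every a ∈ Z/pZ, the pair (v,a) lies in the upward closure of S if and only if a = Σ_{l ∈ L, l in the subtree rooted at v} σ(l), the sum in Z/pZ of the values σ(l) over all leaves l below v. In particular, for each vertex v there is exactly one a ∈ Z/pZ with (v,a) in the upward closure of S. -/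
/-- The upward closure of a set `X` with respect to a ternary relation `R`:
the smallest superset `Y` of `X` such that whenever `a ∈ Y`, `b ∈ Y` and
`(a,b,c) ∈ R`, also `c ∈ Y`. -/
inductive UpClosure {U : Type*} (R : U → U → U → Prop) (X : Set U) : U → Prop
  | base : ∀ {x : U}, x ∈ X → UpClosure R X x
  | step : ∀ {a b c : U}, UpClosure R X a → UpClosure R X b → R a b c →
      UpClosure R X c

/-- The ternary relation of the PSP instance `P(n,p,σ,t)`:
`((u,a),(v,b),(w,c)) ∈ R` iff `a + b = c` in `Z/pZ` and `u` and `v` are the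
two children of `w` in the complete binary tree of height `n`. -/
def pspR (n p : ℕ) : (V × ZMod p) → (V × ZMod p) → (V × ZMod p) → Prop :=
  fun x y z =>
    x.2 + y.2 = z.2 ∧ z.1.length < n ∧
    ((x.1 = z.1 ++ [true] ∧ y.1 = z.1 ++ [false]) ∨
     (x.1 = z.1 ++ [false] ∧ y.1 = z.1 ++ [true]))

/-- The source set `S = {(l, σ(l)) : l a leaf}` of the PSP instance. -/
def pspS (n p : ℕ) (σ : V → ZMod p) : Set (V × ZMod p) :=
  {x : V × ZMod p | x.1.length = n ∧ x.2 = σ x.1}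

/-!
The upward closure can only produce, at a vertex `v`, the sum of the values of its two
children, so by induction from the leaves up every pair `(v, a)` it contains has `a` equal
to the sum of `σ` over the leaves below `v`. Conversely, that pair is built by the same
induction: both children carry their leaf sums, and the leaves below `v` split into those
below `v ++ [true]` and those below `v ++ [false]`.
-/

def leavesBelow (n : ℕ) (v : V) : Set V := {l : V | l.length = n ∧ v <+: l}

lemma leavesBelow_finite (n : ℕ) (v : V) : (leavesBelow n v).Finite :=
  (List.finite_length_eq Bool n).subset fun _ hl => hl.1

lemma leavesBelow_of_length_eq {n : ℕ} {v : V} (hv : v.length = n) : leavesBelow n v = {v} := by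
  ext l
  constructor
  · rintro ⟨hl, hvl⟩
    exact (hvl.eq_of_length (hv.trans hl.symm)).symm
  · rintro rfl
    exact ⟨hv, List.prefix_refl l⟩

lemma disjoint_leavesBelow_append (n : ℕ) (v : V) :
    Disjoint (leavesBelow n (v ++ [true])) (leavesBelow n (v ++ [false])) := by
  rw [Set.disjoint_left]
  rintro l ⟨-, htrue⟩ ⟨-, hfalse⟩
  have : v ++ [true] = v ++ [false] :=
    (List.prefix_of_prefix_length_le htrue hfalse (by simp)).eq_of_length (by simp)
  simp at this

lemma leavesBelow_eq_union {n : ℕ} {v : V} (hv : v.length < n) :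
    leavesBelow n v = leavesBelow n (v ++ [true]) ∪ leavesBelow n (v ++ [false]) := by
  ext l
  constructor
  · rintro ⟨hl, t, rfl⟩
    match t with
    | [] => rw [List.append_nil] at hl; omega
    | true :: t' => exact Or.inl ⟨hl, t', by simp⟩
    | false :: t' => exact Or.inr ⟨hl, t', by simp⟩
  · rintro (⟨hl, hvl⟩ | ⟨hl, hvl⟩) <;> exact ⟨hl, (v.prefix_append _).trans hvl⟩

section LeafSum

variable {M : Type*} [AddCommMonoid M] (n : ℕ) (σ : V → M)

noncomputable def leafSum (v : V) : M := ∑ᶠ l ∈ leavesBelow n v, σ l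

lemma leafSum_of_length_eq {v : V} (hv : v.length = n) : leafSum n σ v = σ v := by
  rw [leafSum, leavesBelow_of_length_eq hv, finsum_mem_singleton]

lemma leafSum_eq_add {v : V} (hv : v.length < n) :
    leafSum n σ v = leafSum n σ (v ++ [true]) + leafSum n σ (v ++ [false]) := by
  rw [leafSum, leavesBelow_eq_union hv,
    finsum_mem_union (disjoint_leavesBelow_append n v) (leavesBelow_finite _ _)
      (leavesBelow_finite _ _)]
  rfl

end LeafSum

section PSP

variable {n p : ℕ} {σ : V → ZMod p}

lemma snd_eq_leafSum_of_upClosure {x : V × ZMod p}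
    (hx : UpClosure (pspR n p) (pspS n p σ) x) : x.2 = leafSum n σ x.1 := by
  induction hx with
  | base hx => rw [hx.2, leafSum_of_length_eq n σ hx.1]
  | step _ _ hR iha ihb =>
    obtain ⟨hsum, hlen, ⟨ha, hb⟩ | ⟨ha, hb⟩⟩ := hR
    · rw [← hsum, iha, ihb, ha, hb, leafSum_eq_add n σ hlen]
    · rw [← hsum, iha, ihb, ha, hb, leafSum_eq_add n σ hlen, add_comm]

lemma upClosure_leafSum {v : V} (hv : v.length ≤ n) :
    UpClosure (pspR n p) (pspS n p σ) (v, leafSum n σ v) := by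
  rcases hv.lt_or_eq with hlt | heq
  · have hchild (b : Bool) : (v ++ [b]).length ≤ n := by simpa using hlt
    exact .step (upClosure_leafSum (hchild true)) (upClosure_leafSum (hchild false))
      ⟨(leafSum_eq_add n σ hlt).symm, hlt, .inl ⟨rfl, rfl⟩⟩
  · exact .base ⟨heq, leafSum_of_length_eq n σ heq⟩
termination_by n - v.length
decreasing_by all_goals simp only [List.length_append, List.length_singleton]; omega

lemma upClosure_iff_eq_leafSum {v : V} (hv : v.length ≤ n) (a : ZMod p) :
    UpClosure (pspR n p) (pspS n p σ) (v, a) ↔ a = leafSum n σ v := by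
  refine ⟨snd_eq_leafSum_of_upClosure, ?_⟩
  rintro rfl
  exact upClosure_leafSum hv

end PSP

theorem stmt_9_general (n p : ℕ) (σ : V → ZMod p) :
    (∀ v : V, v.length ≤ n → ∀ a : ZMod p,
      (UpClosure (pspR n p) (pspS n p σ) (v, a) ↔
        a = ∑ᶠ l ∈ {l : V | l.length = n ∧ v <+: l}, σ l)) ∧
    (∀ v : V, v.length ≤ n →
      ∃! a : ZMod p, UpClosure (pspR n p) (pspS n p σ) (v, a)) :=
  ⟨fun _ hv => upClosure_iff_eq_leafSum hv,
    fun _ hv => ⟨_, upClosure_leafSum hv, fun _ => snd_eq_leafSum_of_upClosure⟩⟩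

/-- in the PSP instance `P(n,p,σ,t)`, for every tree vertex
`v` and every `a ∈ Z/pZ`, the pair `(v,a)` lies in the upward closure of `S`
iff `a` is the sum of `σ(l)` over the leaves `l` below `v`; in particular for
each vertex `v` there is exactly one such `a`. -/
theorem stmt_9 (n p : ℕ) (hn : 1 ≤ n) (hp : p.Prime) (σ : V → ZMod p) :
    (∀ v : V, v.length ≤ n → ∀ a : ZMod p,
      (UpClosure (pspR n p) (pspS n p σ) (v, a) ↔
        a = ∑ᶠ l ∈ {l : V | l.length = n ∧ v <+: l}, σ l)) ∧
    (∀ v : V, v.length ≤ n →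
      ∃! a : ZMod p, UpClosure (pspR n p) (pspS n p σ) (v, a)) :=
  stmt_9_general n p σ
end
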